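/- arXiv:1106.6002 — 3 statements merged into one kernel-verified Lean document; each statement's English description precedes it below -/
import Mathlib

section
/- Let ξ_n > 0 and η_n > 0 be sequences with ξ_n η_n → 0 and n^{1/2} η_n → ∞. Suppose θ_n ∈ ℝ and σ_n ∈ (0,∞) are sequences such that θ_n/(σ_n ξ_n η_n) → ζ in the extended real line. Then: (1) if |ζ| < 1 then p_n(θ_n, σ_n) → 1; (2) if |ζ| > 1 then p_n(θ_n, σ_n) → 0; (3) if |ζ| = 1 and n^{1/2}(η_n − ζ θ_n/(σ_n ξ_n)) → r in the extended real line, then p_n(θ_n, σ_n) → Φ(r). -/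
open MeasureTheory ProbabilityTheory Filter Set

/-- Standard normal cdf. -/
noncomputable def Phi (x : ℝ) : ℝ :=
  ∫ t in Iic x, (Real.sqrt (2 * Real.pi))⁻¹ * Real.exp (-t ^ 2 / 2)

/-- Standard normal pdf. -/
noncomputable def stdPhi (t : ℝ) : ℝ :=
  (Real.sqrt (2 * Real.pi))⁻¹ * Real.exp (-t ^ 2 / 2)

/-- Extension of `Phi` to the extended reals, with `PhiE ⊤ = 1` and `PhiE ⊥ = 0`. -/
noncomputable def PhiE (z : EReal) : ℝ :=
  if z = ⊤ then 1 else if z = ⊥ then 0 else Phi z.toReal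

/-- Density of `m^{-1/2}` times the square root of a chi-square with `m` degrees of freedom. -/
noncomputable def rho (m : ℕ) (s : ℝ) : ℝ :=
  if 0 < s then
    (2 : ℝ) ^ ((1 : ℝ) - (m : ℝ) / 2) * (Real.Gamma ((m : ℝ) / 2))⁻¹ * Real.sqrt m *
      ((m : ℝ) * s ^ 2) ^ (((m : ℝ) - 1) / 2) * Real.exp (-(m : ℝ) * s ^ 2 / 2)
  else 0

/-- Known-variance variable deletion probability. -/
noncomputable def pdel (n : ℕ) (ξ η θ σ : ℝ) : ℝ :=
  Phi (Real.sqrt n * (-θ / (σ * ξ) + η)) - Phi (Real.sqrt n * (-θ / (σ * ξ) - η))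

/-! With `a = √n η_n → ∞` and `t = θ_n / (σ_n ξ_n η_n) → ζ`, the deletion probability is
`Φ(a (1 - t)) - Φ(-a (1 + t))`. For `|ζ| < 1` the two arguments tend to `+∞` and `-∞`; for `ζ > 1`
both tend to `-∞`; for `ζ = 1` the first one tends to `r` and the second to `-∞`. Since
`Φ(-x) = 1 - Φ(x)`, the expression is invariant under `t ↦ -t`, which reduces `ζ < -1` and
`ζ = -1` to the previous cases. -/

open scoped Topology

lemma stdPhi_eq_exp (t : ℝ) :
    stdPhi t = (Real.sqrt (2 * Real.pi))⁻¹ * Real.exp (-(1 / 2) * t ^ 2) := by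
  rw [stdPhi, neg_div, div_eq_inv_mul, neg_mul, one_div]

lemma stdPhi_nonneg (t : ℝ) : 0 ≤ stdPhi t := by
  rw [stdPhi]
  positivity

lemma stdPhi_neg (t : ℝ) : stdPhi (-t) = stdPhi t := by
  rw [stdPhi, stdPhi, neg_sq]

lemma integrable_stdPhi : Integrable stdPhi :=
  ((integrable_exp_neg_mul_sq (by norm_num : (0 : ℝ) < 1 / 2)).const_mul _).congr
    (ae_of_all _ fun t => (stdPhi_eq_exp t).symm)

lemma integral_stdPhi : ∫ t, stdPhi t = 1 := by
  simp_rw [stdPhi_eq_exp, integral_const_mul, integral_gaussian,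
    show Real.pi / (1 / 2) = 2 * Real.pi by ring]
  exact inv_mul_cancel₀ (by positivity)

lemma Phi_eq_setIntegral (x : ℝ) : Phi x = ∫ t in Iic x, stdPhi t := rfl

lemma monotone_Phi : Monotone Phi := fun _ _ hxy =>
  setIntegral_mono_set integrable_stdPhi.integrableOn (ae_of_all _ fun t => stdPhi_nonneg t)
    (ae_of_all _ (Iic_subset_Iic.2 hxy))

lemma Phi_eq_add_intervalIntegral (x : ℝ) : Phi x = Phi 0 + ∫ t in (0 : ℝ)..x, stdPhi t := by
  rw [Phi_eq_setIntegral, Phi_eq_setIntegral, ← intervalIntegral.integral_Iic_sub_Iic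
    integrable_stdPhi.integrableOn integrable_stdPhi.integrableOn, add_sub_cancel]

lemma continuous_Phi : Continuous Phi := by
  rw [funext Phi_eq_add_intervalIntegral]
  exact continuous_const.add (integrable_stdPhi.continuous_primitive 0)

lemma Phi_add_setIntegral_Ioi (x : ℝ) : Phi x + ∫ t in Ioi x, stdPhi t = 1 := by
  rw [Phi_eq_setIntegral, intervalIntegral.integral_Iic_add_Ioi integrable_stdPhi.integrableOn
    integrable_stdPhi.integrableOn, integral_stdPhi]

lemma Phi_neg (x : ℝ) : Phi (-x) = 1 - Phi x := by
  have hsymm : Phi (-x) = ∫ t in Ioi x, stdPhi t := by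
    simpa [Phi_eq_setIntegral, stdPhi_neg] using integral_comp_neg_Iic (-x) stdPhi
  rw [hsymm, ← Phi_add_setIntegral_Ioi x, add_sub_cancel_left]

lemma tendsto_Phi_atTop : Tendsto Phi atTop (𝓝 1) := by
  have h := intervalIntegral_tendsto_integral_Ioi 0 integrable_stdPhi.integrableOn tendsto_id
  rw [← Phi_add_setIntegral_Ioi 0]
  exact (tendsto_const_nhds.add h).congr fun x => (Phi_eq_add_intervalIntegral x).symm

lemma tendsto_Phi_atBot : Tendsto Phi atBot (𝓝 0) := by
  have h := (tendsto_const_nhds (x := (1 : ℝ))).sub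
    (tendsto_Phi_atTop.comp tendsto_neg_atBot_atTop)
  rw [sub_self] at h
  exact h.congr fun x => by rw [Function.comp_apply, ← Phi_neg, neg_neg]

lemma tendsto_Phi_of_tendsto_coe {α : Type*} {l : Filter α} {a : α → ℝ} {r : EReal}
    (h : Tendsto (fun x => (a x : EReal)) l (𝓝 r)) :
    Tendsto (fun x => Phi (a x)) l (𝓝 (PhiE r)) := by
  induction r with
  | bot =>
    simpa [PhiE, Function.comp_def] using
      tendsto_Phi_atBot.comp (EReal.tendsto_coe_nhds_bot_iff.1 h)
  | coe y =>
    simpa [PhiE, Function.comp_def] using (continuous_Phi.tendsto y).comp (EReal.tendsto_coe.1 h)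
  | top =>
    simpa [PhiE, Function.comp_def] using
      tendsto_Phi_atTop.comp (EReal.tendsto_coe_nhds_top_iff.1 h)

/-- The probability that `t + Z / a` lies in `[-1, 1]` for a standard normal `Z`. -/
noncomputable def normalBandProb (a t : ℝ) : ℝ :=
  Phi (a * (1 - t)) - Phi (-(a * (1 + t)))

lemma normalBandProb_neg (a t : ℝ) : normalBandProb a (-t) = normalBandProb a t := by
  rw [normalBandProb, normalBandProb, Phi_neg, Phi_neg, sub_neg_eq_add, ← sub_eq_add_neg]
  ring

lemma div_eq_mul_div_mul_of_ne_zero {η : ℝ} (hη : η ≠ 0) (θ s : ℝ) :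
    θ / s = η * (θ / (s * η)) := by
  rw [← div_div, mul_div_cancel₀ _ hη]

lemma pdel_eq_normalBandProb {n : ℕ} {ξ η θ σ : ℝ} (hη : η ≠ 0) :
    pdel n ξ η θ σ = normalBandProb (Real.sqrt n * η) (θ / (σ * ξ * η)) := by
  rw [pdel, normalBandProb, neg_div, div_eq_mul_div_mul_of_ne_zero hη θ]
  ring_nf

section Limits

variable {α : Type*} {l : Filter α} {a t : α → ℝ}

lemma tendsto_neg_mul_one_add_atBot (ha : Tendsto a l atTop) {z : ℝ} (ht : Tendsto t l (𝓝 z))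
    (hz : -1 < z) : Tendsto (fun x => -(a x * (1 + t x))) l atBot :=
  tendsto_neg_atTop_atBot.comp (ha.atTop_mul_pos (by linarith) (tendsto_const_nhds.add ht))

lemma tendsto_normalBandProb_of_abs_lt_one (ha : Tendsto a l atTop) {z : ℝ}
    (ht : Tendsto t l (𝓝 z)) (hz : |z| < 1) :
    Tendsto (fun x => normalBandProb (a x) (t x)) l (𝓝 1) := by
  obtain ⟨hz₁, hz₂⟩ := abs_lt.1 hz
  have hupper : Tendsto (fun x => a x * (1 - t x)) l atTop :=
    ha.atTop_mul_pos (by linarith) (tendsto_const_nhds.sub ht)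
  simpa [normalBandProb] using (tendsto_Phi_atTop.comp hupper).sub
    (tendsto_Phi_atBot.comp (tendsto_neg_mul_one_add_atBot ha ht hz₁))

lemma tendsto_normalBandProb_zero_of_eventually_lt (ha : Tendsto a l atTop) {c : ℝ} (hc : 1 < c)
    (ht : ∀ᶠ x in l, c < t x) : Tendsto (fun x => normalBandProb (a x) (t x)) l (𝓝 0) := by
  have hupper : Tendsto (fun x => a x * (1 - t x)) l atBot := by
    refine tendsto_atBot_mono' l ?_ (ha.atTop_mul_const_of_neg (sub_neg.2 hc))
    filter_upwards [ht, ha.eventually_ge_atTop 0] with x htx hax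
    exact mul_le_mul_of_nonneg_left (by linarith) hax
  have hlower : Tendsto (fun x => -(a x * (1 + t x))) l atBot := by
    refine tendsto_atBot_mono' l ?_ hupper
    filter_upwards [ha.eventually_ge_atTop 0] with x hax
    linarith
  simpa [normalBandProb] using (tendsto_Phi_atBot.comp hupper).sub (tendsto_Phi_atBot.comp hlower)

lemma tendsto_normalBandProb_zero_of_one_lt (ha : Tendsto a l atTop) {ζ : EReal}
    (ht : Tendsto (fun x => (t x : EReal)) l (𝓝 ζ)) (hζ : 1 < ζ) :
    Tendsto (fun x => normalBandProb (a x) (t x)) l (𝓝 0) := by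
  obtain ⟨c, hc, hcζ⟩ := EReal.lt_iff_exists_real_btwn.1 hζ
  exact tendsto_normalBandProb_zero_of_eventually_lt ha (EReal.coe_lt_coe_iff.1 hc)
    ((ht.eventually_const_lt hcζ).mono fun x => EReal.coe_lt_coe_iff.1)

lemma tendsto_normalBandProb_zero_of_lt_neg_one (ha : Tendsto a l atTop) {ζ : EReal}
    (ht : Tendsto (fun x => (t x : EReal)) l (𝓝 ζ)) (hζ : ζ < -1) :
    Tendsto (fun x => normalBandProb (a x) (t x)) l (𝓝 0) := by
  have hneg : Tendsto (fun x => ((-t x : ℝ) : EReal)) l (𝓝 (-ζ)) := by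
    simpa only [EReal.coe_neg] using ht.neg
  simpa only [normalBandProb_neg] using
    tendsto_normalBandProb_zero_of_one_lt ha hneg (EReal.lt_neg_of_lt_neg hζ)

lemma tendsto_normalBandProb_of_tendsto_one (ha : Tendsto a l atTop) (ht : Tendsto t l (𝓝 1))
    {r : EReal} (hr : Tendsto (fun x => ((a x * (1 - t x) : ℝ) : EReal)) l (𝓝 r)) :
    Tendsto (fun x => normalBandProb (a x) (t x)) l (𝓝 (PhiE r)) := by
  simpa [normalBandProb] using (tendsto_Phi_of_tendsto_coe hr).sub
    (tendsto_Phi_atBot.comp (tendsto_neg_mul_one_add_atBot ha ht (by norm_num)))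

lemma tendsto_normalBandProb_of_abs_eq_one (ha : Tendsto a l atTop) {z : ℝ}
    (ht : Tendsto t l (𝓝 z)) (hz : |z| = 1) {r : EReal}
    (hr : Tendsto (fun x => ((a x * (1 - z * t x) : ℝ) : EReal)) l (𝓝 r)) :
    Tendsto (fun x => normalBandProb (a x) (t x)) l (𝓝 (PhiE r)) := by
  rcases (abs_eq zero_le_one).1 hz with rfl | rfl
  · simp only [one_mul] at hr
    exact tendsto_normalBandProb_of_tendsto_one ha ht hr
  · simp only [neg_one_mul] at hr
    simpa only [normalBandProb_neg] using
      tendsto_normalBandProb_of_tendsto_one ha (by simpa using ht.neg) hr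

end Limits

theorem stmt_2_general (ξ η : ℕ → ℝ)
    (hne : Tendsto (fun n : ℕ => Real.sqrt n * η n) atTop atTop)
    (θ σ : ℕ → ℝ)
    (ζ : EReal)
    (hζ : Tendsto (fun n : ℕ => ((θ n / (σ n * ξ n * η n) : ℝ) : EReal)) atTop (nhds ζ)) :
    ((-1 < ζ ∧ ζ < 1) →
        Tendsto (fun n : ℕ => pdel n (ξ n) (η n) (θ n) (σ n)) atTop (nhds 1)) ∧
    ((ζ < -1 ∨ 1 < ζ) →
        Tendsto (fun n : ℕ => pdel n (ξ n) (η n) (θ n) (σ n)) atTop (nhds 0)) ∧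
    (∀ (ζr : ℝ) (r : EReal), ζ = (ζr : EReal) → |ζr| = 1 →
        Tendsto (fun n : ℕ => ((Real.sqrt n * (η n - ζr * θ n / (σ n * ξ n)) : ℝ) : EReal))
          atTop (nhds r) →
        Tendsto (fun n : ℕ => pdel n (ξ n) (η n) (θ n) (σ n)) atTop (nhds (PhiE r))) := by
  set t : ℕ → ℝ := fun n => θ n / (σ n * ξ n * η n)
  have hη : ∀ᶠ n in atTop, η n ≠ 0 :=
    (hne.eventually_gt_atTop 0).mono fun n hn => right_ne_zero_of_mul hn.ne'
  have hp : (fun n : ℕ => normalBandProb (Real.sqrt n * η n) (t n))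
      =ᶠ[atTop] fun n => pdel n (ξ n) (η n) (θ n) (σ n) :=
    hη.mono fun n hn => (pdel_eq_normalBandProb hn).symm
  refine ⟨fun ⟨h₁, h₂⟩ => ?_, ?_, fun ζr r hζr habs hr => ?_⟩
  · lift ζ to ℝ using ⟨h₂.ne_top, h₁.ne_bot⟩
    have hz : |ζ| < 1 := abs_lt.2 ⟨EReal.coe_lt_coe_iff.1 h₁, EReal.coe_lt_coe_iff.1 h₂⟩
    exact (tendsto_normalBandProb_of_abs_lt_one hne (EReal.tendsto_coe.1 hζ) hz).congr' hp
  · rintro (h | h)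
    · exact (tendsto_normalBandProb_zero_of_lt_neg_one hne hζ h).congr' hp
    · exact (tendsto_normalBandProb_zero_of_one_lt hne hζ h).congr' hp
  · subst hζr
    refine (tendsto_normalBandProb_of_abs_eq_one hne (EReal.tendsto_coe.1 hζ) habs
      (hr.congr' (hη.mono fun n hn => ?_))).congr' hp
    rw [mul_div_assoc, div_eq_mul_div_mul_of_ne_zero hn]
    ring_nf

/-- consistent tuning, moving-parameter limits of the deletion probability. -/
theorem stmt_2 (ξ η : ℕ → ℝ) (hξ : ∀ n, 0 < ξ n) (hη : ∀ n, 0 < η n)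
    (hxe : Tendsto (fun n : ℕ => ξ n * η n) atTop (nhds 0))
    (hne : Tendsto (fun n : ℕ => Real.sqrt n * η n) atTop atTop)
    (θ σ : ℕ → ℝ) (hσ : ∀ n, 0 < σ n)
    (ζ : EReal)
    (hζ : Tendsto (fun n : ℕ => ((θ n / (σ n * ξ n * η n) : ℝ) : EReal)) atTop (nhds ζ)) :
    ((-1 < ζ ∧ ζ < 1) →
        Tendsto (fun n : ℕ => pdel n (ξ n) (η n) (θ n) (σ n)) atTop (nhds 1)) ∧
    ((ζ < -1 ∨ 1 < ζ) →
        Tendsto (fun n : ℕ => pdel n (ξ n) (η n) (θ n) (σ n)) atTop (nhds 0)) ∧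
    (∀ (ζr : ℝ) (r : EReal), ζ = (ζr : EReal) → |ζr| = 1 →
        Tendsto (fun n : ℕ => ((Real.sqrt n * (η n - ζr * θ n / (σ n * ξ n)) : ℝ) : EReal))
          atTop (nhds r) →
        Tendsto (fun n : ℕ => pdel n (ξ n) (η n) (θ n) (σ n)) atTop (nhds (PhiE r))) :=
  stmt_2_general ξ η hne θ σ ζ hζ
end

section
/- Let ξ_n > 0 and η_n > 0 be sequences with ξ_n η_n → 0 and ξ_n/n^{1/2} → 0, and let k_n be integers with 1 ≤ k_n < n. For each n, θ ∈ ℝ and σ > 0, build the feasible estimators θ̃_H, θ̃_S, θ̃_AS from Z with law N(θ, σ²ξ_n²/n), S independent of Z with density ρ_{n−k_n}, threshold parameters ξ = ξ_n and η = η_n. Set a_n = min(n^{1/2}/ξ_n, (ξ_n η_n)^{−1}). Let θ̃ be any one of θ̃_H, θ̃_S, θ̃_AS and let b_n ≥ 0 be a sequence such that for every ε > 0 there exists a real M > 0 with limsup_{n→∞} sup_{θ ∈ ℝ} sup_{0 < σ < ∞} P(b_n |θ̃ − θ| > σ M) < ε. Then b_n = O(a_n), i.e., there is a constant C such that b_n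 ≤ C a_n for all sufficiently large n. -/
/-
One parameter value (with σ = 1) forces each term of the minimum. For θ = 2ξ/√n, none of the
three rules enlarges a positive `Z`, so on `{0 < Z < ξ/√n}` the estimator misses θ by more than
the standard deviation ξ/√n. When ξ/√n ≤ ξη and θ = ξη/30, on `{|Z - θ| < ξ/(30√n), S ≥ 1/15}`
the coordinate `Z` lies below the threshold `Sξη`, so the estimator is `0` and misses θ by ξη/30.
Both events have probability bounded below uniformly in `n`: a Gaussian gives mass at least
length/(27 sd) to an interval within two standard deviations of its mean, and
`P(S < 1/15) ≤ (e²/15)^m ≤ 1/2` since `ρ_m(s) ≤ rhoConst m * s^(m-1)` with `rhoConst m ≤ e^(2m)`.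
-/

open MeasureTheory ProbabilityTheory Filter Set

/-- Joint law of the least-squares coordinate `Z ~ N(θ, σ²ξ²/n)` and the independent
variance-estimator ratio `S` with density `rho m`. -/
noncomputable def jointMeas (n m : ℕ) (ξ θ σ : ℝ) : Measure (ℝ × ℝ) :=
  (gaussianReal θ (Real.toNNReal (σ ^ 2 * ξ ^ 2 / n))).prod
    (volume.withDensity fun s => ENNReal.ofReal (rho m s))

/-- Feasible hard-thresholding estimator `Z · 1(|Z| > σSξη)`. -/
noncomputable def hardF (σ ξ η : ℝ) (p : ℝ × ℝ) : ℝ :=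
  if σ * p.2 * ξ * η < |p.1| then p.1 else 0

/-- Feasible soft-thresholding estimator `sign(Z)(|Z| − σSξη)₊`. -/
noncomputable def softF (σ ξ η : ℝ) (p : ℝ × ℝ) : ℝ :=
  Real.sign p.1 * max (|p.1| - σ * p.2 * ξ * η) 0

/-- Feasible adaptive soft-thresholding estimator `Z(1 − σ²S²ξ²η²/Z²)₊`. -/
noncomputable def adaptF (σ ξ η : ℝ) (p : ℝ × ℝ) : ℝ :=
  if p.1 = 0 then 0 else p.1 * max (1 - (σ * p.2 * ξ * η) ^ 2 / p.1 ^ 2) 0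

open scoped ENNReal NNReal

noncomputable def rhoConst (m : ℕ) : ℝ :=
  2 ^ ((1 : ℝ) - (m : ℝ) / 2) * (Real.Gamma ((m : ℝ) / 2))⁻¹ * (m : ℝ) ^ ((m : ℝ) / 2)

lemma rhoConst_pos {m : ℕ} (hm : 1 ≤ m) : 0 < rhoConst m := by
  have hm0 : (0 : ℝ) < m := by exact_mod_cast hm
  unfold rhoConst
  positivity

lemma rho_eq_rhoConst_mul {m : ℕ} (hm : 1 ≤ m) {s : ℝ} (hs : 0 < s) :
    rho m s = rhoConst m * (s ^ ((m : ℝ) - 1) * Real.exp (-((m : ℝ) / 2) * s ^ 2)) := by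
  have hm0 : (0 : ℝ) < m := by exact_mod_cast hm
  have hpow : ((m : ℝ) * s ^ 2) ^ (((m : ℝ) - 1) / 2)
      = (m : ℝ) ^ (((m : ℝ) - 1) / 2) * s ^ ((m : ℝ) - 1) := by
    rw [Real.mul_rpow hm0.le (by positivity), ← Real.rpow_natCast s 2, ← Real.rpow_mul hs.le]
    congr 2
    push_cast
    ring
  have hsqrt : Real.sqrt m * (m : ℝ) ^ (((m : ℝ) - 1) / 2) = (m : ℝ) ^ ((m : ℝ) / 2) := by
    rw [Real.sqrt_eq_rpow, ← Real.rpow_add hm0]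
    ring_nf
  rw [rho, if_pos hs, hpow, rhoConst, ← hsqrt,
    show -(m : ℝ) * s ^ 2 / 2 = -((m : ℝ) / 2) * s ^ 2 by ring]
  ring

lemma rho_nonneg (m : ℕ) (s : ℝ) : 0 ≤ rho m s := by
  unfold rho
  split_ifs
  · positivity
  · exact le_rfl

lemma rho_of_nonpos (m : ℕ) {s : ℝ} (hs : s ≤ 0) : rho m s = 0 := by
  rw [rho, if_neg hs.not_gt]

lemma integral_rpow_mul_exp_neg_half_mul_sq {m : ℕ} (hm : 1 ≤ m) :
    ∫ s in Ioi (0 : ℝ), s ^ ((m : ℝ) - 1) * Real.exp (-((m : ℝ) / 2) * s ^ 2)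
      = ((m : ℝ) / 2) ^ (-(m : ℝ) / 2) * (1 / 2) * Real.Gamma ((m : ℝ) / 2) := by
  have hm1 : (1 : ℝ) ≤ m := by exact_mod_cast hm
  have key := integral_rpow_mul_exp_neg_mul_rpow (p := 2) (q := (m : ℝ) - 1)
    two_pos (by linarith) (by linarith : (0 : ℝ) < m / 2)
  simp only [Real.rpow_two, sub_add_cancel] at key
  rw [key, neg_div]

lemma integral_rho {m : ℕ} (hm : 1 ≤ m) : ∫ s in Ioi (0 : ℝ), rho m s = 1 := by
  have hm0 : (0 : ℝ) < m := by exact_mod_cast hm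
  have hΓ : 0 < Real.Gamma ((m : ℝ) / 2) := Real.Gamma_pos_of_pos (by positivity)
  rw [setIntegral_congr_fun measurableSet_Ioi (fun s hs => rho_eq_rhoConst_mul hm hs),
    integral_const_mul, integral_rpow_mul_exp_neg_half_mul_sq hm, rhoConst,
    Real.div_rpow hm0.le zero_le_two, neg_div, Real.rpow_neg hm0.le, Real.rpow_neg zero_le_two,
    Real.rpow_sub two_pos, Real.rpow_one]
  field_simp

noncomputable def rhoMeasure (m : ℕ) : Measure ℝ :=
  volume.withDensity fun s => ENNReal.ofReal (rho m s)

lemma rhoMeasure_apply (m : ℕ) (A : Set ℝ) :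
    rhoMeasure m A = ∫⁻ s in A, ENNReal.ofReal (rho m s) :=
  withDensity_apply' _ A

lemma rhoMeasure_Iic_zero (m : ℕ) : rhoMeasure m (Iic 0) = 0 := by
  rw [rhoMeasure_apply, setLIntegral_congr_fun measurableSet_Iic
    (fun s hs => by rw [rho_of_nonpos m hs])]
  simp

lemma rhoMeasure_univ {m : ℕ} (hm : 1 ≤ m) : rhoMeasure m univ = 1 := by
  have hint : IntegrableOn (rho m) (Ioi 0) :=
    Integrable.of_integral_ne_zero (by rw [integral_rho hm]; exact one_ne_zero)
  rw [← Iic_union_Ioi (a := (0 : ℝ)), measure_union (Iic_disjoint_Ioi le_rfl) measurableSet_Ioi,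
    rhoMeasure_Iic_zero, zero_add, rhoMeasure_apply,
    ← ofReal_integral_eq_lintegral_ofReal hint (ae_of_all _ (rho_nonneg m)), integral_rho hm,
    ENNReal.ofReal_one]

-- The normalisation `∫ rho = 1`, tested on `[1, 2]` where the density is at least
-- `rhoConst m * exp (-2m)`, bounds the constant without any estimate on `Γ`.
lemma rhoConst_le_exp_two_pow {m : ℕ} (hm : 1 ≤ m) : rhoConst m ≤ Real.exp 2 ^ m := by
  have hm1 : (1 : ℝ) ≤ m := by exact_mod_cast hm
  have hlow : ∀ s ∈ Icc (1 : ℝ) 2,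
      ENNReal.ofReal (rhoConst m / Real.exp 2 ^ m) ≤ ENNReal.ofReal (rho m s) := by
    rintro s ⟨hs1, hs2⟩
    apply ENNReal.ofReal_le_ofReal
    rw [rho_eq_rhoConst_mul hm (by linarith), div_eq_mul_inv, ← Real.exp_nat_mul,
      ← Real.exp_neg]
    refine mul_le_mul_of_nonneg_left ?_ (rhoConst_pos hm).le
    have hs4 : s ^ 2 ≤ 4 := by nlinarith
    calc Real.exp (-(m * 2)) = 1 * Real.exp (-(m * 2)) := (one_mul _).symm
      _ ≤ s ^ ((m : ℝ) - 1) * Real.exp (-((m : ℝ) / 2) * s ^ 2) := by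
        gcongr
        · exact Real.one_le_rpow hs1 (by linarith)
        · nlinarith
  have h : ENNReal.ofReal (rhoConst m / Real.exp 2 ^ m) ≤ 1 :=
    calc ENNReal.ofReal (rhoConst m / Real.exp 2 ^ m)
        = ∫⁻ _ in Icc (1 : ℝ) 2, ENNReal.ofReal (rhoConst m / Real.exp 2 ^ m) := by
          rw [setLIntegral_const, Real.volume_Icc]; norm_num
      _ ≤ rhoMeasure m (Icc 1 2) := by
          rw [rhoMeasure_apply]; exact setLIntegral_mono' measurableSet_Icc hlow
      _ ≤ 1 := (measure_mono (subset_univ _)).trans (rhoMeasure_univ hm).le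
  rwa [ENNReal.ofReal_le_one, div_le_one (by positivity)] at h

lemma rhoMeasure_Iio_le {m : ℕ} (hm : 1 ≤ m) {δ : ℝ} (hδ : 0 < δ) :
    rhoMeasure m (Iio δ) ≤ ENNReal.ofReal ((Real.exp 2 * δ) ^ m) := by
  have hm1 : (1 : ℝ) ≤ m := by exact_mod_cast hm
  have hdens : ∀ s ∈ Ioo 0 δ,
      ENNReal.ofReal (rho m s) ≤ ENNReal.ofReal (rhoConst m * δ ^ ((m : ℝ) - 1)) := by
    rintro s ⟨hs0, hsδ⟩
    apply ENNReal.ofReal_le_ofReal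
    rw [rho_eq_rhoConst_mul hm hs0]
    refine mul_le_mul_of_nonneg_left ?_ (rhoConst_pos hm).le
    calc s ^ ((m : ℝ) - 1) * Real.exp (-((m : ℝ) / 2) * s ^ 2) ≤ δ ^ ((m : ℝ) - 1) * 1 :=
          mul_le_mul (Real.rpow_le_rpow hs0.le hsδ.le (by linarith))
            (Real.exp_le_one_iff.2 (by nlinarith)) (Real.exp_pos _).le (by positivity)
      _ = δ ^ ((m : ℝ) - 1) := mul_one _
  calc rhoMeasure m (Iio δ) ≤ rhoMeasure m (Iic 0 ∪ Ioo 0 δ) :=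
        measure_mono fun s (hs : s < δ) => (le_or_gt s 0).imp id fun h => ⟨h, hs⟩
    _ ≤ rhoMeasure m (Iic 0) + rhoMeasure m (Ioo 0 δ) := measure_union_le _ _
    _ ≤ ∫⁻ _ in Ioo 0 δ, ENNReal.ofReal (rhoConst m * δ ^ ((m : ℝ) - 1)) := by
        rw [rhoMeasure_Iic_zero, zero_add, rhoMeasure_apply]
        exact setLIntegral_mono' measurableSet_Ioo hdens
    _ = ENNReal.ofReal (rhoConst m * δ ^ m) := by
        rw [setLIntegral_const, Real.volume_Ioo, ← ENNReal.ofReal_mul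
          (mul_nonneg (rhoConst_pos hm).le (by positivity)),
          Real.rpow_sub_one hδ.ne', Real.rpow_natCast, sub_zero]
        field_simp
    _ ≤ ENNReal.ofReal ((Real.exp 2 * δ) ^ m) := by
        rw [mul_pow]
        gcongr
        exact rhoConst_le_exp_two_pow hm

lemma rhoMeasure_Ici_ge {m : ℕ} (hm : 1 ≤ m) :
    ENNReal.ofReal (1 / 2) ≤ rhoMeasure m (Ici (1 / 15)) := by
  have hsmall : rhoMeasure m (Iio (1 / 15)) ≤ ENNReal.ofReal (1 / 2) := by
    refine (rhoMeasure_Iio_le hm (by norm_num)).trans (ENNReal.ofReal_le_ofReal ?_)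
    have he : Real.exp 2 < 7.5 := by
      rw [show (2 : ℝ) = 1 + 1 by norm_num, Real.exp_add]
      nlinarith [Real.exp_one_lt_d9, Real.exp_pos 1]
    calc (Real.exp 2 * (1 / 15)) ^ m ≤ (1 / 2) ^ m := by gcongr; linarith
      _ ≤ 1 / 2 := pow_le_of_le_one (by norm_num) (by norm_num) (by omega)
  have hsplit := measure_add_measure_compl (μ := rhoMeasure m) (measurableSet_Iio (a := (1 / 15 : ℝ)))
  rw [compl_Iio, rhoMeasure_univ hm] at hsplit
  calc ENNReal.ofReal (1 / 2) = 1 - ENNReal.ofReal (1 / 2) := by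
        rw [← ENNReal.ofReal_one, ← ENNReal.ofReal_sub _ (by norm_num)]; norm_num
    _ ≤ rhoMeasure m (Ici (1 / 15)) := by
        rw [tsub_le_iff_left, ← hsplit]
        gcongr

lemma inv_le_gaussianPDFReal {θ : ℝ} {v : ℝ≥0} (hv : v ≠ 0) {x : ℝ}
    (hx : (x - θ) ^ 2 ≤ 4 * v) : (27 * Real.sqrt v)⁻¹ ≤ gaussianPDFReal θ v x := by
  have hv0 : (0 : ℝ) < v := by positivity
  have hsqrt : Real.sqrt (2 * Real.pi * v) ≤ 3 * Real.sqrt v := by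
    rw [Real.sqrt_mul (by positivity)]
    gcongr
    rw [Real.sqrt_le_left (by norm_num)]
    nlinarith [Real.pi_le_four]
  have hexp : (9 : ℝ)⁻¹ ≤ Real.exp (-(x - θ) ^ 2 / (2 * v)) := by
    calc (9 : ℝ)⁻¹ ≤ Real.exp (-2) := by
          rw [Real.exp_neg, show (2 : ℝ) = 1 + 1 by norm_num, Real.exp_add]
          gcongr
          nlinarith [Real.exp_one_lt_d9, Real.exp_pos 1]
      _ ≤ Real.exp (-(x - θ) ^ 2 / (2 * v)) := by
          gcongr
          rw [le_div_iff₀ (by positivity)]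
          linarith
  calc (27 * Real.sqrt v)⁻¹ = (3 * Real.sqrt v)⁻¹ * 9⁻¹ := by rw [← mul_inv]; ring_nf
    _ ≤ (Real.sqrt (2 * Real.pi * v))⁻¹ * Real.exp (-(x - θ) ^ 2 / (2 * v)) := by
        gcongr
    _ = gaussianPDFReal θ v x := rfl

lemma gaussianReal_Ioo_ge {θ : ℝ} {v : ℝ≥0} (hv : v ≠ 0) {a c : ℝ}
    (ha : θ - 2 * Real.sqrt v ≤ a) (hc : c ≤ θ + 2 * Real.sqrt v) :
    ENNReal.ofReal ((c - a) / (27 * Real.sqrt v)) ≤ gaussianReal θ v (Ioo a c) := by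
  have hsq : Real.sqrt v ^ 2 = v := Real.sq_sqrt v.2
  have hdens : ∀ x ∈ Ioo a c,
      ENNReal.ofReal (27 * Real.sqrt v)⁻¹ ≤ gaussianPDF θ v x := by
    rintro x ⟨hax, hxc⟩
    exact ENNReal.ofReal_le_ofReal (inv_le_gaussianPDFReal hv (by nlinarith))
  calc ENNReal.ofReal ((c - a) / (27 * Real.sqrt v))
      = ∫⁻ _ in Ioo a c, ENNReal.ofReal (27 * Real.sqrt v)⁻¹ := by
        rw [setLIntegral_const, Real.volume_Ioo, ← ENNReal.ofReal_mul (by positivity),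
          div_eq_inv_mul]
    _ ≤ gaussianReal θ v (Ioo a c) := by
        rw [gaussianReal_apply θ hv]
        exact setLIntegral_mono' measurableSet_Ioo hdens

section Thresholding

variable {σ ξ η : ℝ} {p : ℝ × ℝ}

lemma hardF_le_self (hp : 0 ≤ p.1) : hardF σ ξ η p ≤ p.1 := by
  unfold hardF
  split_ifs <;> linarith

lemma softF_le_self (hp : 0 ≤ p.1) (hτ : 0 ≤ σ * p.2 * ξ * η) : softF σ ξ η p ≤ p.1 := by
  unfold softF
  rcases hp.eq_or_lt with h | h
  · simp [← h]
  · rw [Real.sign_of_pos h, one_mul, abs_of_pos h]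
    exact max_le (by linarith) h.le

lemma adaptF_le_self (hp : 0 ≤ p.1) : adaptF σ ξ η p ≤ p.1 := by
  unfold adaptF
  split_ifs
  · exact hp
  · have hfrac := div_nonneg (sq_nonneg (σ * p.2 * ξ * η)) (sq_nonneg p.1)
    calc p.1 * max (1 - (σ * p.2 * ξ * η) ^ 2 / p.1 ^ 2) 0 ≤ p.1 * 1 :=
          mul_le_mul_of_nonneg_left (max_le (by linarith) zero_le_one) hp
      _ = p.1 := mul_one _

lemma hardF_eq_zero (h : |p.1| ≤ σ * p.2 * ξ * η) : hardF σ ξ η p = 0 :=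
  if_neg h.not_gt

lemma softF_eq_zero (h : |p.1| ≤ σ * p.2 * ξ * η) : softF σ ξ η p = 0 := by
  rw [softF, max_eq_right (by linarith), mul_zero]

lemma adaptF_eq_zero (h : |p.1| ≤ σ * p.2 * ξ * η) : adaptF σ ξ η p = 0 := by
  unfold adaptF
  split_ifs with h0
  · rfl
  · have hratio : 1 ≤ (σ * p.2 * ξ * η) ^ 2 / p.1 ^ 2 := by
      rw [le_div_iff₀ (by positivity), one_mul, ← sq_abs p.1]
      exact pow_le_pow_left₀ (abs_nonneg _) h 2
    rw [max_eq_right (by linarith), mul_zero]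

variable {T : ℝ → ℝ → ℝ → ℝ × ℝ → ℝ}

lemma thresholdRule_le_self (hT : T = hardF ∨ T = softF ∨ T = adaptF) (hp : 0 ≤ p.1)
    (hτ : 0 ≤ σ * p.2 * ξ * η) : T σ ξ η p ≤ p.1 := by
  rcases hT with rfl | rfl | rfl
  exacts [hardF_le_self hp, softF_le_self hp hτ, adaptF_le_self hp]

lemma thresholdRule_eq_zero (hT : T = hardF ∨ T = softF ∨ T = adaptF)
    (h : |p.1| ≤ σ * p.2 * ξ * η) : T σ ξ η p = 0 := by
  rcases hT with rfl | rfl | rfl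
  exacts [hardF_eq_zero h, softF_eq_zero h, adaptF_eq_zero h]

end Thresholding

lemma jointMeas_Ioo_prod_Ici_ge {n m : ℕ} (hm : 1 ≤ m) (hn : 0 < n) {ξ θ a c : ℝ} (hξ : 0 < ξ)
    (ha : θ - 2 * (ξ / Real.sqrt n) ≤ a) (hc : c ≤ θ + 2 * (ξ / Real.sqrt n)) :
    ENNReal.ofReal ((c - a) / (54 * (ξ / Real.sqrt n)))
      ≤ jointMeas n m ξ θ 1 (Ioo a c ×ˢ Ici (1 / 15)) := by
  have hn0 : (0 : ℝ) < n := by exact_mod_cast hn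
  set v : ℝ≥0 := Real.toNNReal (1 ^ 2 * ξ ^ 2 / n)
  have hv : v ≠ 0 := (Real.toNNReal_pos.2 (by positivity)).ne'
  have hsd : Real.sqrt v = ξ / Real.sqrt n := by
    rw [Real.coe_toNNReal _ (by positivity), one_pow, one_mul, Real.sqrt_div' _ hn0.le,
      Real.sqrt_sq hξ.le]
  rw [jointMeas, Measure.prod_prod]
  calc ENNReal.ofReal ((c - a) / (54 * (ξ / Real.sqrt n)))
      = ENNReal.ofReal ((c - a) / (27 * (ξ / Real.sqrt n))) * ENNReal.ofReal (1 / 2) := by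
        rw [← ENNReal.ofReal_mul' (by norm_num)]
        ring_nf
    _ ≤ gaussianReal θ v (Ioo a c) * rhoMeasure m (Ici (1 / 15)) := by
        gcongr
        · rw [← hsd] at ha hc ⊢
          exact gaussianReal_Ioo_ge hv ha hc
        · exact rhoMeasure_Ici_ge hm

section LowerBounds

variable {n m : ℕ} {ξ η b M : ℝ} {T : ℝ → ℝ → ℝ → ℝ × ℝ → ℝ}

lemma mul_div_sqrt_le_of_jointMeas_lt (hm : 1 ≤ m) (hn : 0 < n) (hξ : 0 < ξ) (hη : 0 < η)
    (hM : 0 ≤ M) (hT : T = hardF ∨ T = softF ∨ T = adaptF)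
    (h : jointMeas n m ξ (2 * (ξ / Real.sqrt n)) 1
        {p | M < b * |T 1 ξ η p - 2 * (ξ / Real.sqrt n)|} < ENNReal.ofReal (1 / 54)) :
    b * (ξ / Real.sqrt n) ≤ M := by
  set s := ξ / Real.sqrt n
  have hs : 0 < s := div_pos hξ (Real.sqrt_pos.2 (by exact_mod_cast hn))
  by_contra! hlt
  have hb : 0 < b := lt_of_mul_lt_mul_right (by linarith : 0 * s < b * s) hs.le
  have hsub : Ioo 0 s ×ˢ Ici (1 / 15) ⊆ {p | M < b * |T 1 ξ η p - 2 * s|} := by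
    rintro ⟨z, y⟩ ⟨⟨hz0, hzs⟩, hy⟩
    have hy0 : (0 : ℝ) ≤ y := le_trans (by norm_num) (mem_Ici.1 hy)
    have hshrink : T 1 ξ η (z, y) ≤ z :=
      thresholdRule_le_self hT hz0.le (by simp only; positivity)
    have hmiss : s < |T 1 ξ η (z, y) - 2 * s| := by
      rw [abs_sub_comm, lt_abs]
      left
      linarith
    exact hlt.trans (mul_lt_mul_of_pos_left hmiss hb)
  have hbox := jointMeas_Ioo_prod_Ici_ge (m := m) (θ := 2 * s) (a := 0) (c := s) hm hn hξ
    (by linarith) (by linarith)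
  rw [sub_zero, show s / (54 * s) = 1 / 54 by field_simp] at hbox
  exact (hbox.trans (measure_mono hsub)).not_gt h

lemma mul_le_of_jointMeas_lt (hm : 1 ≤ m) (hn : 0 < n) (hξ : 0 < ξ)
    (hT : T = hardF ∨ T = softF ∨ T = adaptF) (hsw : ξ / Real.sqrt n ≤ ξ * η)
    (h : jointMeas n m ξ (ξ * η / 30) 1 {p | M < b * |T 1 ξ η p - ξ * η / 30|}
        < ENNReal.ofReal (1 / 810)) :
    b * (ξ * η) ≤ 30 * M := by
  set s := ξ / Real.sqrt n
  set w := ξ * η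
  have hs : 0 < s := div_pos hξ (Real.sqrt_pos.2 (by exact_mod_cast hn))
  by_contra! hlt
  have hsub : Ioo (w / 30 - s / 30) (w / 30 + s / 30) ×ˢ Ici (1 / 15)
      ⊆ {p | M < b * |T 1 ξ η p - w / 30|} := by
    rintro ⟨z, y⟩ ⟨⟨hz0, hzw⟩, hy⟩
    have hy : (1 / 15 : ℝ) ≤ y := hy
    have hkill : T 1 ξ η (z, y) = 0 := by
      refine thresholdRule_eq_zero hT ?_
      simp only
      rw [abs_of_pos (by linarith)]
      nlinarith
    show M < b * |T 1 ξ η (z, y) - w / 30|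
    rw [hkill, zero_sub, abs_neg, abs_of_pos (by linarith)]
    linarith
  have hbox := jointMeas_Ioo_prod_Ici_ge (m := m) (θ := w / 30) hm hn hξ
    (a := w / 30 - s / 30) (c := w / 30 + s / 30) (by linarith) (by linarith)
  rw [show (w / 30 + s / 30 - (w / 30 - s / 30)) / (54 * s) = 1 / 810 by field_simp; ring]
    at hbox
  exact (hbox.trans (measure_mono hsub)).not_gt h

lemma le_mul_min_of_jointMeas_lt (hm : 1 ≤ m) (hn : 0 < n) (hξ : 0 < ξ) (hη : 0 < η)
    (hM : 0 ≤ M) (hT : T = hardF ∨ T = softF ∨ T = adaptF)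
    (h : ∀ θ, jointMeas n m ξ θ 1 {p | M < b * |T 1 ξ η p - θ|} < ENNReal.ofReal (1 / 810)) :
    b ≤ 30 * M * min (Real.sqrt n / ξ) ((ξ * η)⁻¹) := by
  have hs : 0 < ξ / Real.sqrt n := div_pos hξ (Real.sqrt_pos.2 (by exact_mod_cast hn))
  have hw : 0 < ξ * η := mul_pos hξ hη
  rw [← inv_div]
  rcases le_total (ξ / Real.sqrt n) (ξ * η) with hsw | hws
  · rw [min_eq_right (inv_anti₀ hs hsw), ← div_eq_mul_inv, le_div_iff₀ hw]
    exact mul_le_of_jointMeas_lt hm hn hξ hT hsw (h _)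
  · have hsd := mul_div_sqrt_le_of_jointMeas_lt hm hn hξ hη hM hT
      ((h _).trans_le (ENNReal.ofReal_le_ofReal (by norm_num)))
    rw [min_eq_left (inv_anti₀ hw hws), ← div_eq_mul_inv, le_div_iff₀ hs]
    linarith

end LowerBounds

theorem stmt_9_general (ξ η : ℕ → ℝ) (hξ : ∀ n, 0 < ξ n) (hη : ∀ n, 0 < η n)
    (k : ℕ → ℕ) (hk : ∀ n, 2 ≤ n → 1 ≤ k n ∧ k n < n)
    (T : ℝ → ℝ → ℝ → ℝ × ℝ → ℝ) (hT : T = hardF ∨ T = softF ∨ T = adaptF)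
    (b : ℕ → ℝ)
    (hbdd : ∀ ε > (0 : ℝ), ∃ M > (0 : ℝ), ∀ᶠ n in atTop, ∀ θ σ : ℝ, 0 < σ →
      jointMeas n (n - k n) (ξ n) θ σ
          {p : ℝ × ℝ | σ * M < b n * |T σ (ξ n) (η n) p - θ|}
        < ENNReal.ofReal ε) :
    ∃ C : ℝ, ∀ᶠ n in atTop,
      b n ≤ C * min (Real.sqrt n / ξ n) ((ξ n * η n)⁻¹) := by
  obtain ⟨M, hM, hev⟩ := hbdd (1 / 810) (by norm_num)
  refine ⟨30 * M, ?_⟩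
  filter_upwards [hev, eventually_ge_atTop 2] with n hn hn2
  have hm : 1 ≤ n - k n := by
    have := (hk n hn2).2
    omega
  exact le_mul_min_of_jointMeas_lt hm (by omega) (hξ n) (hη n) hM.le hT fun θ => by
    simpa only [one_mul] using hn θ 1 one_pos

/-- the uniform rate `a_n = min(n^{1/2}/ξ_n, (ξ_n η_n)^{-1})` is sharp: any
rate `b_n` at which a feasible thresholding estimator is uniformly consistent satisfies
`b_n = O(a_n)`. -/
theorem stmt_9 (ξ η : ℕ → ℝ) (hξ : ∀ n, 0 < ξ n) (hη : ∀ n, 0 < η n)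
    (hxe : Tendsto (fun n : ℕ => ξ n * η n) atTop (nhds 0))
    (hxn : Tendsto (fun n : ℕ => ξ n / Real.sqrt n) atTop (nhds 0))
    (k : ℕ → ℕ) (hk : ∀ n, 2 ≤ n → 1 ≤ k n ∧ k n < n)
    (T : ℝ → ℝ → ℝ → ℝ × ℝ → ℝ) (hT : T = hardF ∨ T = softF ∨ T = adaptF)
    (b : ℕ → ℝ) (hb : ∀ n, 0 ≤ b n)
    (hbdd : ∀ ε > (0 : ℝ), ∃ M > (0 : ℝ), ∀ᶠ n in atTop, ∀ θ σ : ℝ, 0 < σ →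
      jointMeas n (n - k n) (ξ n) θ σ
          {p : ℝ × ℝ | σ * M < b n * |T σ (ξ n) (η n) p - θ|}
        < ENNReal.ofReal ε) :
    ∃ C : ℝ, ∀ᶠ n in atTop,
      b n ≤ C * min (Real.sqrt n / ξ n) ((ξ n * η n)⁻¹) :=
  stmt_9_general ξ η hξ hη k hk T hT b hbdd
end

section
/- Fix n ≥ 1, θ ∈ ℝ, σ > 0, ξ > 0, η > 0 and a scaling factor α > 0. Let Z be a real random variable with Gaussian law N(θ, σ²ξ²/n) and let θ̂_AS = Z(1 − σ²ξ²η²/Z²)_+ (with θ̂_AS = 0 when Z = 0) be the adaptive soft-thresholding estimator, where (·)_+ = max(·, 0). Define z^{(2)}(x, y) = 0.5 n^{1/2} ξ^{−1}(x/α − θ/σ) + n^{1/2} √((0.5 ξ^{−1}(x/α + θ/σ))² + y²) and z^{(1)}(x, y) = 0.5 n^{1/2} ξ^{−1}(x/α − θ/σ) − n^{1/2} √((0.5 ξ^{−1}(x/α + θ/σ))² + y²). Then for every x ∈ ℝ, P(σ^{−1}α(θ̂_AS − θ) ≤ x) = Φ(z^{(2)}(x, η))·1(x/α + θ/σ ≥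 0) + Φ(z^{(1)}(x, η))·1(x/α + θ/σ < 0). -/
open MeasureTheory ProbabilityTheory Filter Set

/-! The map `T z = z (1 - c²/z²)₊` vanishes on `[-|c|, |c|]` and equals `z - c²/z` outside, so it
is nondecreasing and `{T ≤ t}` is a half-line `(-∞, g]`, where `g = t/2 ± √(t²/4 + c²)` is the root
of `g² - t g - c² = 0` having the sign of `t` (the nonnegative one for `t = 0`). The cdf of the
estimator is therefore a Gaussian cdf at `g`. The scaled event `σ⁻¹α(T - θ) ≤ x` is `T ≤ σ a` with
`a = x/α + θ/σ`, and after standardising the two roots become `z⁽²⁾` and `z⁽¹⁾`. -/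

lemma gaussianReal_zero_one_Iic_toReal (z : ℝ) : (gaussianReal 0 1 (Iic z)).toReal = Phi z := by
  rw [gaussianReal_apply_eq_integral 0 one_ne_zero,
    ENNReal.toReal_ofReal (integral_nonneg fun t => gaussianPDFReal_nonneg _ _ _)]
  unfold Phi gaussianPDFReal
  congr 1
  ext t
  norm_num

lemma gaussianReal_Iic_toReal (μ : ℝ) {s : ℝ} (hs : 0 < s) (g : ℝ) :
    (gaussianReal μ (s ^ 2).toNNReal (Iic g)).toReal = Phi ((g - μ) / s) := by
  have hmap : gaussianReal μ (s ^ 2).toNNReal = ((gaussianReal 0 1).map (s * ·)).map (· + μ) := by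
    rw [gaussianReal_map_const_mul, gaussianReal_map_add_const]
    congr 1
    · ring
    · ext
      simp [Real.coe_toNNReal _ (sq_nonneg s)]
  have hpre : (fun y => s * y + μ) ⁻¹' Iic g = Iic ((g - μ) / s) := by
    ext y
    simp [le_div_iff₀ hs, le_sub_iff_add_le, mul_comm]
  rw [hmap, Measure.map_map (measurable_add_const μ) (measurable_const_mul s),
    Measure.map_apply (by fun_prop) measurableSet_Iic]
  exact (congrArg _ (congrArg _ hpre)).trans (gaussianReal_zero_one_Iic_toReal _)

noncomputable def adaptiveSoftThreshold (c z : ℝ) : ℝ :=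
  if z = 0 then 0 else z * max (1 - c ^ 2 / z ^ 2) 0

section AdaptiveSoftThreshold

variable {c t z : ℝ}

lemma adaptiveSoftThreshold_of_sq_le (h : z ^ 2 ≤ c ^ 2) : adaptiveSoftThreshold c z = 0 := by
  unfold adaptiveSoftThreshold
  split_ifs with hz
  · rfl
  rw [max_eq_right (by rw [sub_nonpos, le_div_iff₀ (by positivity)]; linarith), mul_zero]

-- At `z = 0` both sides vanish, the right one because `x / 0 = 0`.
lemma adaptiveSoftThreshold_of_le_sq (h : c ^ 2 ≤ z ^ 2) :
    adaptiveSoftThreshold c z = (z ^ 2 - c ^ 2) / z := by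
  unfold adaptiveSoftThreshold
  split_ifs with hz
  · simp [hz]
  rw [max_eq_left (by rwa [sub_nonneg, div_le_one (by positivity)])]
  field_simp

lemma sq_sub_sq_sub_mul_eq_mul (c t z : ℝ) :
    z ^ 2 - c ^ 2 - t * z =
      (z - (t / 2 + √(t ^ 2 / 4 + c ^ 2))) * (z - (t / 2 - √(t ^ 2 / 4 + c ^ 2))) := by
  linear_combination Real.sq_sqrt (show 0 ≤ t ^ 2 / 4 + c ^ 2 by positivity)

lemma abs_half_le_sqrt (c t : ℝ) : |t / 2| ≤ √(t ^ 2 / 4 + c ^ 2) :=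
  Real.abs_le_sqrt (by nlinarith [sq_nonneg c])

lemma adaptiveSoftThreshold_le_iff_of_pos (hz : 0 < z) (h : c ^ 2 ≤ z ^ 2) :
    adaptiveSoftThreshold c z ≤ t ↔ z ≤ t / 2 + √(t ^ 2 / 4 + c ^ 2) := by
  have hroot : 0 < z - (t / 2 - √(t ^ 2 / 4 + c ^ 2)) := by
    linarith [le_abs_self (t / 2), abs_half_le_sqrt c t]
  rw [adaptiveSoftThreshold_of_le_sq h, div_le_iff₀ hz, ← sub_nonpos, sq_sub_sq_sub_mul_eq_mul,
    ← sub_nonpos (a := z)]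
  exact ⟨fun h => nonpos_of_mul_nonpos_left h hroot,
    fun h => mul_nonpos_of_nonpos_of_nonneg h hroot.le⟩

lemma adaptiveSoftThreshold_le_iff_of_neg (hz : z < 0) (h : c ^ 2 ≤ z ^ 2) :
    adaptiveSoftThreshold c z ≤ t ↔ z ≤ t / 2 - √(t ^ 2 / 4 + c ^ 2) := by
  have hroot : z - (t / 2 + √(t ^ 2 / 4 + c ^ 2)) < 0 := by
    linarith [neg_abs_le (t / 2), abs_half_le_sqrt c t]
  rw [adaptiveSoftThreshold_of_le_sq h, div_le_iff_of_neg hz, ← sub_nonneg,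
    sq_sub_sq_sub_mul_eq_mul, ← sub_nonpos (a := z)]
  exact ⟨fun h => nonpos_of_mul_nonneg_right h hroot,
    fun h => mul_nonneg_of_nonpos_of_nonpos hroot.le h⟩

lemma setOf_adaptiveSoftThreshold_le_of_nonneg (ht : 0 ≤ t) :
    {z | adaptiveSoftThreshold c z ≤ t} = Iic (t / 2 + √(t ^ 2 / 4 + c ^ 2)) := by
  ext z
  rcases le_total (z ^ 2) (c ^ 2) with hflat | hout
  · have : |z| ≤ √(t ^ 2 / 4 + c ^ 2) := Real.abs_le_sqrt (by nlinarith)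
    exact iff_of_true (by rwa [mem_ofPred_eq, adaptiveSoftThreshold_of_sq_le hflat])
      (by rw [mem_Iic]; linarith [le_abs_self z])
  rcases lt_or_ge 0 z with hz | hz
  · exact adaptiveSoftThreshold_le_iff_of_pos hz hout
  · have hleft : adaptiveSoftThreshold c z ≤ 0 := by
      rw [adaptiveSoftThreshold_of_le_sq hout]
      exact div_nonpos_of_nonneg_of_nonpos (sub_nonneg.2 hout) hz
    exact iff_of_true (hleft.trans ht)
      (by rw [mem_Iic]; linarith [Real.sqrt_nonneg (t ^ 2 / 4 + c ^ 2)])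

lemma setOf_adaptiveSoftThreshold_le_of_neg (ht : t < 0) :
    {z | adaptiveSoftThreshold c z ≤ t} = Iic (t / 2 - √(t ^ 2 / 4 + c ^ 2)) := by
  ext z
  rcases le_total (z ^ 2) (c ^ 2) with hflat | hout
  · have : |z| ≤ √(t ^ 2 / 4 + c ^ 2) := Real.abs_le_sqrt (by nlinarith)
    exact iff_of_false (by rw [mem_ofPred_eq, adaptiveSoftThreshold_of_sq_le hflat]; linarith)
      (by rw [mem_Iic]; linarith [neg_abs_le z])
  rcases lt_or_ge z 0 with hz | hz
  · exact adaptiveSoftThreshold_le_iff_of_neg hz hout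
  · have hright : 0 ≤ adaptiveSoftThreshold c z := by
      rw [adaptiveSoftThreshold_of_le_sq hout]
      exact div_nonneg (sub_nonneg.2 hout) hz
    exact iff_of_false (by rw [mem_ofPred_eq]; linarith)
      (by rw [mem_Iic]; linarith [Real.sqrt_nonneg (t ^ 2 / 4 + c ^ 2)])

end AdaptiveSoftThreshold

lemma gaussianReal_setOf_adaptiveSoftThreshold_le (θ c t : ℝ) {s : ℝ} (hs : 0 < s) :
    (gaussianReal θ (s ^ 2).toNNReal {z | adaptiveSoftThreshold c z ≤ t}).toReal =
      Phi ((t / 2 + √(t ^ 2 / 4 + c ^ 2) - θ) / s) * (if 0 ≤ t then 1 else 0) +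
        Phi ((t / 2 - √(t ^ 2 / 4 + c ^ 2) - θ) / s) * (if t < 0 then 1 else 0) := by
  rcases le_or_gt 0 t with ht | ht
  · simp [setOf_adaptiveSoftThreshold_le_of_nonneg ht, gaussianReal_Iic_toReal θ hs, ht]
  · simp [setOf_adaptiveSoftThreshold_le_of_neg ht, gaussianReal_Iic_toReal θ hs, ht, not_le.2 ht]

theorem stmt_12_general (n : ℕ) (hn : 1 ≤ n) (θ σ ξ η α : ℝ)
    (hσ : 0 < σ) (hξ : 0 < ξ) (hα : 0 < α) (x : ℝ) :
    (gaussianReal θ (Real.toNNReal (σ ^ 2 * ξ ^ 2 / n))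
        {z : ℝ | σ⁻¹ * α *
          ((if z = 0 then 0 else z * max (1 - (σ * ξ * η) ^ 2 / z ^ 2) 0) - θ) ≤ x}).toReal =
      Phi (0.5 * Real.sqrt n * ξ⁻¹ * (x / α - θ / σ) +
            Real.sqrt n * Real.sqrt ((0.5 * ξ⁻¹ * (x / α + θ / σ)) ^ 2 + η ^ 2)) *
          (if 0 ≤ x / α + θ / σ then 1 else 0)
        + Phi (0.5 * Real.sqrt n * ξ⁻¹ * (x / α - θ / σ) -
            Real.sqrt n * Real.sqrt ((0.5 * ξ⁻¹ * (x / α + θ / σ)) ^ 2 + η ^ 2)) *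
          (if x / α + θ / σ < 0 then 1 else 0) := by
  set a := x / α + θ / σ
  set R := √((0.5 * ξ⁻¹ * a) ^ 2 + η ^ 2)
  have hvar : σ ^ 2 * ξ ^ 2 / n = (σ * ξ / √n) ^ 2 := by
    rw [div_pow, mul_pow, Real.sq_sqrt n.cast_nonneg]
  have hevent : {z | σ⁻¹ * α * (adaptiveSoftThreshold (σ * ξ * η) z - θ) ≤ x} =
      {z | adaptiveSoftThreshold (σ * ξ * η) z ≤ σ * a} := by
    have hx : x = σ⁻¹ * α * (σ * a - θ) := by simp only [a]; field_simp; ring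
    ext T
    rw [mem_ofPred_eq, mem_ofPred_eq, hx, mul_le_mul_iff_right₀ (by positivity),
      sub_le_sub_iff_right]
  have hroot : √((σ * a) ^ 2 / 4 + (σ * ξ * η) ^ 2) = σ * ξ * R := by
    rw [show (σ * a) ^ 2 / 4 + (σ * ξ * η) ^ 2 = (σ * ξ) ^ 2 * ((0.5 * ξ⁻¹ * a) ^ 2 + η ^ 2) by
      field_simp; ring, Real.sqrt_mul (sq_nonneg _), Real.sqrt_sq (by positivity)]
  change (gaussianReal θ _ {z | σ⁻¹ * α * (adaptiveSoftThreshold (σ * ξ * η) z - θ) ≤ x}).toReal = _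
  rw [hevent, hvar, gaussianReal_setOf_adaptiveSoftThreshold_le θ _ _ (by positivity), hroot]
  simp only [← not_le, mul_nonneg_iff_of_pos_left hσ]
  congr 3 <;> simp only [a] <;> field_simp <;> ring

/-- finite-sample cdf of the scaled and centered infeasible adaptive
soft-thresholding estimator. -/
theorem stmt_12 (n : ℕ) (hn : 1 ≤ n) (θ σ ξ η α : ℝ)
    (hσ : 0 < σ) (hξ : 0 < ξ) (hη : 0 < η) (hα : 0 < α) (x : ℝ) :
    (gaussianReal θ (Real.toNNReal (σ ^ 2 * ξ ^ 2 / n))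
        {z : ℝ | σ⁻¹ * α *
          ((if z = 0 then 0 else z * max (1 - (σ * ξ * η) ^ 2 / z ^ 2) 0) - θ) ≤ x}).toReal =
      Phi (0.5 * Real.sqrt n * ξ⁻¹ * (x / α - θ / σ) +
            Real.sqrt n * Real.sqrt ((0.5 * ξ⁻¹ * (x / α + θ / σ)) ^ 2 + η ^ 2)) *
          (if 0 ≤ x / α + θ / σ then 1 else 0)
        + Phi (0.5 * Real.sqrt n * ξ⁻¹ * (x / α - θ / σ) -
            Real.sqrt n * Real.sqrt ((0.5 * ξ⁻¹ * (x / α + θ / σ)) ^ 2 + η ^ 2)) *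
          (if x / α + θ / σ < 0 then 1 else 0) :=
  stmt_12_general n hn θ σ ξ η α hσ hξ hα x
end
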